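/- arXiv:2108.00036 — 3 statements merged into one kernel-verified Lean document; each statement's English description precedes it below -/
import Mathlib

section
/- For $r \leq m \leq n$, the dimension of the space of $S_m$-invariants in $S^r(\mathbb{C}^k \otimes \mathbb{C}^m)$ (for the diagonal permutation action of $S_m$ on the second tensor factor) equals the dimension of the space of $S_n$-invariants in $S^r(\mathbb{C}^k \otimes \mathbb{C}^n)$. -/
/-!
Restriction to the first `m` columns of variables (setting the others to `0`) and symmetrization
over `S_n` of a polynomial in the first `m` columns map the two spaces of invariants into each
other, and both maps are injective. Symmetrization is injective because the coefficient of a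
monomial `x^ν` in the symmetrization of an `S_m`-invariant `q` is a positive multiple of the
coefficient of `x^ν` in `q`. Restriction is injective in degree `r ≤ m` because every monomial of
degree `r` involves at most `m` columns, so some permutation moves it into the first `m` columns
without changing the coefficient of an invariant polynomial.
-/

open MvPolynomial

/-- The subspace of `S_n`-invariant homogeneous polynomials of degree `d` in `k` sets of
`n` variables, where `σ ∈ S_n` acts diagonally by sending the variable `ᵢxⱼ` to `ᵢx_{σ(j)}`.
This is the space of `S_n`-invariants in `S^d(ℂ^k ⊗ ℂ^n)`. -/
noncomputable def invDeg (k n d : ℕ) : Submodule ℂ (MvPolynomial (Fin k × Fin n) ℂ) :=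
  (homogeneousSubmodule (Fin k × Fin n) ℂ d) ⊓
    ⨅ σ : Equiv.Perm (Fin n),
      LinearMap.ker
        ((rename (Prod.map id σ) : MvPolynomial (Fin k × Fin n) ℂ →ₐ[ℂ]
            MvPolynomial (Fin k × Fin n) ℂ).toLinearMap - LinearMap.id)

open Finset

theorem Function.Embedding.exists_perm_extend {α : Type*} [Finite α] {p : α → Prop}
    (e : Subtype p ↪ α) :
    ∃ π : Equiv.Perm α, ∀ x : Subtype p, π x = e x := by
  classical
  have := Fintype.ofFinite α
  exact ⟨e.toEquivRange.extendSubtype, fun x => Equiv.extendSubtype_apply_of_mem _ _ x.2⟩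

theorem Finsupp.card_support_le_degree {α : Type*} (μ : α →₀ ℕ) : #μ.support ≤ μ.degree := by
  rw [Finsupp.degree_apply, card_eq_sum_ones]
  exact Finset.sum_le_sum fun i hi => Nat.one_le_iff_ne_zero.mpr (Finsupp.mem_support_iff.mp hi)

theorem LinearMap.finrank_le_finrank_of_injOn {K V W : Type*} [DivisionRing K]
    [AddCommGroup V] [Module K V] [AddCommGroup W] [Module K W] (f : V →ₗ[K] W)
    {P : Submodule K V} {Q : Submodule K W} [FiniteDimensional K Q]
    (hmaps : ∀ x ∈ P, f x ∈ Q) (hinj : ∀ x ∈ P, f x = 0 → x = 0) :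
    Module.finrank K P ≤ Module.finrank K Q := by
  refine LinearMap.finrank_le_finrank_of_injective (f := (f.domRestrict P).codRestrict Q
    fun x => hmaps x x.2) ?_
  rw [← LinearMap.ker_eq_bot, LinearMap.ker_eq_bot']
  exact fun x hx => Subtype.ext (hinj x x.2 (congrArg Subtype.val hx))

namespace MvPolynomial

variable {R κ ι ι' : Type*} [CommSemiring R]

section Columns

variable [Fintype ι] (e : ι ↪ ι')

theorem exists_perm_mapDomain_eq_mapDomain [Finite ι'] (μ : κ × ι' →₀ ℕ)
    (hμ : μ.degree ≤ Fintype.card ι) :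
    ∃ π : Equiv.Perm ι', ∃ ν : κ × ι →₀ ℕ,
      μ.mapDomain (Prod.map id π) = ν.mapDomain (Prod.map id e) := by
  classical
  set S := μ.support.image Prod.snd
  have hS : #S ≤ Fintype.card ι := (card_image_le.trans μ.card_support_le_degree).trans hμ
  obtain ⟨π, hπ⟩ := (S.equivFin.toEmbedding.trans ((Fin.castLEEmb hS).trans
    ((Fintype.equivFin ι).symm.toEmbedding.trans e))).exists_perm_extend
  have hsupp :
      ((μ.mapDomain (Prod.map id π)).support : Set (κ × ι')) ⊆ Set.range (Prod.map id e) := by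
    rw [Finsupp.mapDomain_support_of_injective (Function.injective_id.prodMap π.injective),
      coe_image]
    rintro _ ⟨x, hx, rfl⟩
    exact ⟨(x.1, _), Prod.ext rfl (hπ ⟨x.2, mem_image_of_mem _ hx⟩).symm⟩
  exact ⟨π, _, (Finsupp.mapDomain_comapDomain _
    (Function.injective_id.prodMap e.injective) _ hsupp).symm⟩

theorem exists_perm_of_mapDomain_eq_mapDomain (σ : Equiv.Perm ι')
    {u ν : κ × ι →₀ ℕ}
    (h : u.mapDomain (Prod.map id (σ ∘ e)) = ν.mapDomain (Prod.map id e)) :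
    ∃ π : Equiv.Perm ι, u.mapDomain (Prod.map id π) = ν := by
  classical
  set S := u.support.image Prod.snd
  have hS : ∀ j ∈ S, σ (e j) ∈ Set.range e := by
    intro j hj
    obtain ⟨x, hx, rfl⟩ := mem_image.mp hj
    have hx' : (x.1, σ (e x.2)) ∈ (ν.mapDomain (Prod.map id e)).support := by
      rw [← h, Finsupp.mapDomain_support_of_injective
        (Function.injective_id.prodMap (σ.injective.comp e.injective))]
      exact mem_image_of_mem _ hx
    rw [Finsupp.mapDomain_support_of_injective
      (Function.injective_id.prodMap e.injective)] at hx'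
    obtain ⟨y, -, hy⟩ := mem_image.mp hx'
    exact ⟨y.2, congrArg Prod.snd hy⟩
  let w : S ↪ ι :=
    ⟨fun j => (Equiv.ofInjective e e.injective).symm ⟨σ (e j), hS j j.2⟩, fun i j hij => by
      have := congrArg e hij
      simp only [Equiv.apply_ofInjective_symm] at this
      exact Subtype.ext (e.injective (σ.injective this))⟩
  obtain ⟨π, hπ⟩ := w.exists_perm_extend
  refine ⟨π, Finsupp.mapDomain_injective (Function.injective_id.prodMap e.injective) ?_⟩
  rw [← Finsupp.mapDomain_comp, ← h]
  refine Finsupp.mapDomain_congr fun x hx => Prod.ext rfl ?_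
  simp only [Function.comp_apply, Prod.map_snd]
  rw [hπ ⟨x.2, mem_image_of_mem _ hx⟩]
  exact Equiv.apply_ofInjective_symm e.injective _

end Columns

def IsMultisymmetric (p : MvPolynomial (κ × ι) R) : Prop :=
  ∀ σ : Equiv.Perm ι, rename (Prod.map id σ) p = p

theorem IsMultisymmetric.coeff_mapDomain {p : MvPolynomial (κ × ι) R} (hp : p.IsMultisymmetric)
    (σ : Equiv.Perm ι) (μ : κ × ι →₀ ℕ) :
    coeff (μ.mapDomain (Prod.map id σ)) p = coeff μ p := by
  conv_lhs => rw [← hp σ]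
  exact coeff_rename_mapDomain _ (Function.injective_id.prodMap σ.injective) p μ

theorem IsHomogeneous.degree_eq_of_coeff_ne_zero {σ : Type*} {p : MvPolynomial σ R} {n : ℕ}
    (hp : p.IsHomogeneous n) {d : σ →₀ ℕ} (hd : coeff d p ≠ 0) : d.degree = n := by
  rw [Finsupp.degree_eq_weight_one]
  exact hp hd

theorem IsHomogeneous.killCompl {σ τ : Type*} {f : σ → τ} (hf : Function.Injective f)
    {p : MvPolynomial τ R} {n : ℕ} (hp : p.IsHomogeneous n) :
    (killCompl hf p).IsHomogeneous n := by
  intro s hs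
  rw [coeff_killCompl] at hs
  have := hp.degree_eq_of_coeff_ne_zero hs
  rw [Finsupp.degree_mapDomain, Finsupp.degree_eq_weight_one] at this
  exact this

section Restriction

variable (e : ι ↪ ι')

theorem killCompl_rename_viaEmbedding (π : Equiv.Perm ι) (p : MvPolynomial (κ × ι') R) :
    killCompl (Function.injective_id.prodMap e.injective)
        (rename (Prod.map id (π.viaEmbedding e)) p) =
      rename (Prod.map id π) (killCompl (Function.injective_id.prodMap e.injective) p) := by
  set hf := Function.injective_id.prodMap (f := (id : κ → κ)) e.injective
  suffices (killCompl hf).comp (rename (Prod.map id (π.viaEmbedding e))) =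
      (rename (Prod.map id π)).comp (killCompl hf) from AlgHom.congr_fun this p
  refine algHom_ext fun ⟨i, j⟩ => ?_
  by_cases hj : j ∈ Set.range e
  · obtain ⟨j, rfl⟩ := hj
    have hX : ∀ a b, killCompl hf (X (a, e b)) = (X (a, b) : MvPolynomial (κ × ι) R) :=
      fun a b => (congrArg _ (rename_X _ (a, b)).symm).trans (killCompl_rename_app hf _)
    simp only [AlgHom.comp_apply, rename_X, Prod.map_apply, id_eq, Equiv.Perm.viaEmbedding_apply]
    rw [hX, hX, rename_X]
    rfl
  · have h0 : killCompl hf (X (i, j) : MvPolynomial (κ × ι') R) = 0 := by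
      simp [killCompl, hj]
    simp [Equiv.Perm.viaEmbedding_apply_of_notMem _ _ _ hj, h0]

theorem IsMultisymmetric.killCompl {p : MvPolynomial (κ × ι') R} (hp : p.IsMultisymmetric) :
    (killCompl (Function.injective_id.prodMap e.injective) p).IsMultisymmetric := fun π => by
  rw [← killCompl_rename_viaEmbedding, hp]

theorem IsMultisymmetric.eq_zero_of_killCompl_eq_zero [Fintype ι] [Finite ι']
    {p : MvPolynomial (κ × ι') R} {r : ℕ} (hp : p.IsMultisymmetric) (hhom : p.IsHomogeneous r)
    (hr : r ≤ Fintype.card ι)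
    (h : MvPolynomial.killCompl (Function.injective_id.prodMap e.injective) p = 0) : p = 0 := by
  ext μ
  rw [coeff_zero]
  by_contra hμ
  obtain ⟨π, ν, hπ⟩ := exists_perm_mapDomain_eq_mapDomain e μ
    ((hhom.degree_eq_of_coeff_ne_zero hμ).trans_le hr)
  apply hμ
  rw [← hp.coeff_mapDomain π, hπ, ← coeff_killCompl (Function.injective_id.prodMap e.injective),
    h, coeff_zero]

end Restriction

section Symmetrization

variable [Fintype ι'] [DecidableEq ι'] (e : ι ↪ ι')

noncomputable def symmetrizeExtend : MvPolynomial (κ × ι) R →ₗ[R] MvPolynomial (κ × ι') R :=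
  ∑ σ : Equiv.Perm ι', (rename (Prod.map id (σ ∘ e))).toLinearMap

theorem symmetrizeExtend_apply (q : MvPolynomial (κ × ι) R) :
    symmetrizeExtend e q = ∑ σ : Equiv.Perm ι', rename (Prod.map id (σ ∘ e)) q := by
  simp [symmetrizeExtend]

theorem IsHomogeneous.symmetrizeExtend {q : MvPolynomial (κ × ι) R} {n : ℕ}
    (hq : q.IsHomogeneous n) : (symmetrizeExtend e q).IsHomogeneous n := by
  rw [← mem_homogeneousSubmodule, symmetrizeExtend_apply]
  exact Submodule.sum_mem _ fun σ _ => hq.rename_isHomogeneous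

theorem isMultisymmetric_symmetrizeExtend (q : MvPolynomial (κ × ι) R) :
    (symmetrizeExtend e q).IsMultisymmetric := by
  intro τ
  simp only [symmetrizeExtend_apply, map_sum, rename_rename, Prod.map_comp_map]
  exact Fintype.sum_equiv (Equiv.mulLeft τ) _ _ fun σ => rfl

open Classical in
theorem IsMultisymmetric.coeff_symmetrizeExtend [Fintype ι]
    {q : MvPolynomial (κ × ι) R} (hq : q.IsMultisymmetric) (ν : κ × ι →₀ ℕ) :
    coeff (ν.mapDomain (Prod.map id e)) (symmetrizeExtend e q) =
      #{σ : Equiv.Perm ι' | ∃ u : κ × ι →₀ ℕ,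
        u.mapDomain (Prod.map id (σ ∘ e)) = ν.mapDomain (Prod.map id e)} • coeff ν q := by
  have hterm : ∀ σ : Equiv.Perm ι',
      coeff (ν.mapDomain (Prod.map id e)) (rename (Prod.map id (σ ∘ e)) q) =
        if ∃ u : κ × ι →₀ ℕ, u.mapDomain (Prod.map id (σ ∘ e)) = ν.mapDomain (Prod.map id e)
        then coeff ν q else 0 := by
    intro σ
    split_ifs with h
    · obtain ⟨u, hu⟩ := h
      obtain ⟨π, rfl⟩ := exists_perm_of_mapDomain_eq_mapDomain e σ hu
      rw [← hu, coeff_rename_mapDomain _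
        (Function.injective_id.prodMap (σ.injective.comp e.injective)), hq.coeff_mapDomain]
    · exact coeff_rename_eq_zero _ _ _ fun u hu => absurd ⟨u, hu⟩ h
  simp only [symmetrizeExtend_apply, coeff_sum, hterm, sum_ite, sum_const_zero, add_zero,
    sum_const]

theorem IsMultisymmetric.eq_zero_of_symmetrizeExtend_eq_zero [Fintype ι] [IsAddTorsionFree R]
    {q : MvPolynomial (κ × ι) R} (hq : q.IsMultisymmetric) (h : symmetrizeExtend e q = 0) :
    q = 0 := by
  classical
  ext ν
  have hcount := hq.coeff_symmetrizeExtend e ν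
  rw [h, coeff_zero, eq_comm, smul_eq_zero] at hcount
  exact hcount.resolve_left (card_ne_zero_of_mem (mem_filter.mpr ⟨mem_univ 1, ν, rfl⟩))

end Symmetrization

end MvPolynomial

theorem mem_invDeg {k n d : ℕ} {p : MvPolynomial (Fin k × Fin n) ℂ} :
    p ∈ invDeg k n d ↔ p.IsHomogeneous d ∧ p.IsMultisymmetric := by
  simp only [invDeg, IsMultisymmetric, Submodule.mem_inf, Submodule.mem_iInf, LinearMap.mem_ker,
    LinearMap.sub_apply, AlgHom.toLinearMap_apply, LinearMap.id_apply, sub_eq_zero,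
    mem_homogeneousSubmodule]

instance (k n d : ℕ) : FiniteDimensional ℂ (invDeg k n d) :=
  Submodule.finiteDimensional_of_le fun _ hp =>
    (mem_restrictTotalDegree _ _ _).mpr (mem_invDeg.mp hp).1.totalDegree_le

theorem finrank_invDeg_le_of_le (k r : ℕ) {m n : ℕ} (hmn : m ≤ n) :
    Module.finrank ℂ (invDeg k m r) ≤ Module.finrank ℂ (invDeg k n r) :=
  (symmetrizeExtend (Fin.castLEEmb hmn)).finrank_le_finrank_of_injOn
    (fun _ hq => mem_invDeg.mpr ⟨(mem_invDeg.mp hq).1.symmetrizeExtend _,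
      isMultisymmetric_symmetrizeExtend _ _⟩)
    fun _ hq => (mem_invDeg.mp hq).2.eq_zero_of_symmetrizeExtend_eq_zero _

theorem finrank_invDeg_le_of_degree_le (k : ℕ) {r m n : ℕ} (hrm : r ≤ m) (hmn : m ≤ n) :
    Module.finrank ℂ (invDeg k n r) ≤ Module.finrank ℂ (invDeg k m r) :=
  (killCompl (Function.injective_id.prodMap (Fin.castLEEmb hmn).injective)).toLinearMap
    |>.finrank_le_finrank_of_injOn
    (fun _ hp => mem_invDeg.mpr
      ⟨(mem_invDeg.mp hp).1.killCompl _, (mem_invDeg.mp hp).2.killCompl _⟩)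
    fun _ hp => (mem_invDeg.mp hp).2.eq_zero_of_killCompl_eq_zero _ (mem_invDeg.mp hp).1
      (by simpa using hrm)

/-- For `r ≤ m ≤ n`, `dim S^r(ℂ^k ⊗ ℂ^m)^{S_m} = dim S^r(ℂ^k ⊗ ℂ^n)^{S_n}`. -/
theorem dim_invariants_stable (k r m n : ℕ) (hrm : r ≤ m) (hmn : m ≤ n) :
    Module.finrank ℂ (invDeg k m r) = Module.finrank ℂ (invDeg k n r) :=
  le_antisymm (finrank_invDeg_le_of_le k r hmn) (finrank_invDeg_le_of_degree_le k hrm hmn)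
end

section
/- Let $\lambda$ be a partition with $|\lambda| \leq m \leq n$, and let ${}_n F^\lambda$ denote the irreducible polynomial $GL(n,\mathbb{C})$-representation with highest weight $\lambda$. Then the dimension of the $S_m$-invariants of ${}_m F^\lambda$ equals the dimension of the $S_n$-invariants of ${}_n F^\lambda$, where $S_n \subset GL(n,\mathbb{C})$ is the group of permutation matrices. -/
open scoped TensorProduct

noncomputable section

/-- `TP n N = (ℂⁿ)^{⊗N}`, the `N`-fold tensor power of `ℂⁿ`. -/
abbrev TP (n N : ℕ) : Type := ⨂[ℂ] _ : Fin N, (Fin n → ℂ)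

/-- `S_N` acting on the tensor power by permuting the tensor factors. -/
def permTP (n N : ℕ) (σ : Equiv.Perm (Fin N)) : TP n N ≃ₗ[ℂ] TP n N :=
  PiTensorProduct.reindex ℂ (fun _ : Fin N => Fin n → ℂ) σ

/-- The action of an element of the group algebra `ℂ[S_N]` on the tensor power. -/
def actA (n N : ℕ) (a : MonoidAlgebra ℂ (Equiv.Perm (Fin N))) : TP n N →ₗ[ℂ] TP n N :=
  a.coeff.sum fun σ c => c • (permTP n N σ).toLinearMap

/-- The row index of the cell numbered `x` in the canonical (row-by-row) filling of the
Young diagram with row lengths `l`. -/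
def rowOf (l : List ℕ) (x : ℕ) : ℕ :=
  Nat.findGreatest (fun i => (l.take i).sum ≤ x) l.length

/-- The column index of the cell numbered `x` in the canonical filling. -/
def colOf (l : List ℕ) (x : ℕ) : ℕ := x - (l.take (rowOf l x)).sum

/-- The row group of the canonical tableau of shape `l`: permutations of the cells
preserving each row. -/
def rowSubgroup (l : List ℕ) (N : ℕ) : Subgroup (Equiv.Perm (Fin N)) where
  carrier := {σ | ∀ x : Fin N, rowOf l (σ x) = rowOf l x}
  one_mem' := by intro x; simp
  mul_mem' := by
    intro σ τ hσ hτ x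
    simpa [Equiv.Perm.mul_apply, hτ x] using hσ (τ x)
  inv_mem' := by
    intro σ hσ x
    simpa using (hσ (σ⁻¹ x)).symm

/-- The column group of the canonical tableau of shape `l`: permutations of the cells
preserving each column. -/
def colSubgroup (l : List ℕ) (N : ℕ) : Subgroup (Equiv.Perm (Fin N)) where
  carrier := {σ | ∀ x : Fin N, colOf l (σ x) = colOf l x}
  one_mem' := by intro x; simp
  mul_mem' := by
    intro σ τ hσ hτ x
    simpa [Equiv.Perm.mul_apply, hτ x] using hσ (τ x)
  inv_mem' := by
    intro σ hσ x
    simpa using (hσ (σ⁻¹ x)).symm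

open scoped Classical in
/-- The Young symmetrizer `y_λ = (∑_{p ∈ R} p)(∑_{q ∈ C} sgn(q) q)` of the canonical
tableau of shape `l`, in the group algebra `ℂ[S_N]`. -/
def youngSym (l : List ℕ) (N : ℕ) : MonoidAlgebra ℂ (Equiv.Perm (Fin N)) :=
  (∑ p : rowSubgroup l N, MonoidAlgebra.single (p : Equiv.Perm (Fin N)) (1 : ℂ)) *
    (∑ q : colSubgroup l N,
      MonoidAlgebra.single (q : Equiv.Perm (Fin N))
        ((Equiv.Perm.sign (q : Equiv.Perm (Fin N)) : ℤ) : ℂ))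

/-- The Weyl module `ₙF^λ ⊆ (ℂⁿ)^{⊗|λ|}`: the image of the Young symmetrizer of `λ`
acting on the tensor power.  `GL(n,ℂ)` (acting diagonally) preserves it, and it is the
irreducible `GL(n,ℂ)`-module of highest weight `λ`. -/
def WeylModule (n : ℕ) (l : List ℕ) : Submodule ℂ (TP n l.sum) :=
  LinearMap.range (actA n l.sum (youngSym l l.sum))

/-- The diagonal action of a permutation `τ ∈ Sₙ ⊆ GL(n,ℂ)` on the tensor power
`(ℂⁿ)^{⊗N}`. -/
def diagTP (n N : ℕ) (τ : Equiv.Perm (Fin n)) : TP n N →ₗ[ℂ] TP n N :=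
  PiTensorProduct.map fun _ => LinearMap.funLeft ℂ ℂ τ

/-- The `Sₙ`-invariants of a subspace `F` of the tensor power `(ℂⁿ)^{⊗N}`, for `Sₙ`
acting by permutation matrices (diagonally on the tensor power). -/
def SnInv (n N : ℕ) (F : Submodule ℂ (TP n N)) : Submodule ℂ (TP n N) :=
  F ⊓ ⨅ τ : Equiv.Perm (Fin n), LinearMap.ker (diagTP n N τ - LinearMap.id)
/-!
The `Sₙ`-invariants of `(ℂⁿ)^{⊗N}` are spanned by the `Sₙ`-averages of the basis tensors
`e_f`, `f : Fin N → Fin n`, and such an average depends only on the kernel of `f`, i.e. on a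
set partition of `Fin N` into at most `n` blocks. For `N ≤ m ≤ n` every such partition is the
kernel of a map into `Fin m`, so "reindex along a kernel-preserving map, then average" gives
mutually inverse maps between the `Sₘ`- and the `Sₙ`-invariants. These maps commute with
`S_N` permuting the tensor factors, hence with the Young symmetrizer `y`; and since the two
actions commute, the `Sₙ`-invariants of `y • (ℂⁿ)^{⊗N}` are `y` applied to the `Sₙ`-invariants.
-/

namespace WeylModuleInvariants

open Module

variable {n m N : ℕ}

lemma exists_perm_comp_eq_of_ker_eq {α β : Type*} [Finite α] {f g : β → α}
    (h : Setoid.ker f = Setoid.ker g) : ∃ τ : Equiv.Perm α, ⇑τ ∘ f = g := by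
  classical
  let e : Set.range f ≃ Set.range g :=
    (Setoid.quotientKerEquivRange f).symm.trans
      ((Quotient.congrRight fun _ _ => by rw [h]).trans (Setoid.quotientKerEquivRange g))
  refine ⟨e.extendSubtype, funext fun i => ?_⟩
  rw [Function.comp_apply, Equiv.extendSubtype_apply_of_mem e _ (Set.mem_range_self i)]
  have hf : (⟨f i, Set.mem_range_self i⟩ : Set.range f) = Setoid.quotientKerEquivRange f ⟦i⟧ :=
    rfl
  simp only [e, Equiv.trans_apply, hf, Equiv.symm_apply_apply]
  rfl

def kerRep {α β : Type*} (g : β → α) (i : β) : β :=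
  (⟦i⟧ : Quotient (Setoid.ker g)).out

lemma ker_kerRep {α β : Type*} (g : β → α) : Setoid.ker (kerRep g) = Setoid.ker g :=
  Setoid.ext fun i j => by
    simp [kerRep, Setoid.ker_def, Quotient.eq]

lemma ker_comp_of_injective {α β γ : Type*} {u : α → γ} (hu : Function.Injective u) (f : β → α) :
    Setoid.ker (u ∘ f) = Setoid.ker f :=
  Setoid.ext fun _ _ => hu.eq_iff

lemma ker_comp_congr {α β γ δ : Type*} {f : β → α} {g : β → γ} (h : Setoid.ker f = Setoid.ker g)
    (u : δ → β) : Setoid.ker (f ∘ u) = Setoid.ker (g ∘ u) :=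
  Setoid.ext fun i j => Setoid.ext_iff.1 h (u i) (u j)

lemma finrank_eq_of_invOn {K V W : Type*} [DivisionRing K] [AddCommGroup V] [Module K V]
    [AddCommGroup W] [Module K W] (Φ : V →ₗ[K] W) (Ψ : W →ₗ[K] V) {p : Submodule K V}
    {q : Submodule K W} (hΦ : ∀ x ∈ p, Φ x ∈ q) (hΨ : ∀ y ∈ q, Ψ y ∈ p)
    (hΨΦ : ∀ x ∈ p, Ψ (Φ x) = x) (hΦΨ : ∀ y ∈ q, Φ (Ψ y) = y) :
    finrank K p = finrank K q :=
  (LinearEquiv.ofLinearMap (Φ.restrict hΦ) (Ψ.restrict hΨ)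
    (LinearMap.ext fun y => Subtype.ext (hΦΨ y y.2))
    (LinearMap.ext fun x => Subtype.ext (hΨΦ x x.2))).finrank_eq

def tensorBasis (n N : ℕ) : Basis (Fin N → Fin n) ℂ (TP n N) :=
  Basis.piTensorProduct fun _ => Pi.basisFun ℂ (Fin n)

lemma tensorBasis_apply (f : Fin N → Fin n) :
    tensorBasis n N f = PiTensorProduct.tprod ℂ fun i => Pi.single (f i) 1 := by
  simp [tensorBasis, Basis.piTensorProduct_apply]

lemma diagTP_tensorBasis (τ : Equiv.Perm (Fin n)) (f : Fin N → Fin n) :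
    diagTP n N τ (tensorBasis n N f) = tensorBasis n N (⇑τ⁻¹ ∘ f) := by
  simp only [diagTP, tensorBasis_apply, PiTensorProduct.map_tprod]
  congr 2 with i j
  simp [LinearMap.funLeft_apply, Pi.single_apply, Equiv.eq_symm_apply]

lemma permTP_tensorBasis (σ : Equiv.Perm (Fin N)) (f : Fin N → Fin n) :
    permTP n N σ (tensorBasis n N f) = tensorBasis n N (f ∘ ⇑σ⁻¹) := by
  simp only [permTP, tensorBasis_apply, PiTensorProduct.reindex_tprod]
  rfl

lemma diagTP_diagTP (τ τ' : Equiv.Perm (Fin n)) (x : TP n N) :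
    diagTP n N τ (diagTP n N τ' x) = diagTP n N (τ' * τ) x :=
  LinearMap.congr_fun ((tensorBasis n N).ext (f₁ := diagTP n N τ ∘ₗ diagTP n N τ')
    fun f => by simp [diagTP_tensorBasis, Function.comp_assoc]) x

lemma diagTP_permTP (τ : Equiv.Perm (Fin n)) (σ : Equiv.Perm (Fin N)) (x : TP n N) :
    diagTP n N τ (permTP n N σ x) = permTP n N σ (diagTP n N τ x) :=
  LinearMap.congr_fun ((tensorBasis n N).ext
    (f₁ := diagTP n N τ ∘ₗ (permTP n N σ).toLinearMap)
    (f₂ := (permTP n N σ).toLinearMap ∘ₗ diagTP n N τ)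
    fun f => by simp [diagTP_tensorBasis, permTP_tensorBasis, Function.comp_assoc]) x

def diagInvariants (n N : ℕ) : Submodule ℂ (TP n N) :=
  ⨅ τ : Equiv.Perm (Fin n), LinearMap.ker (diagTP n N τ - LinearMap.id)

lemma mem_diagInvariants {x : TP n N} :
    x ∈ diagInvariants n N ↔ ∀ τ, diagTP n N τ x = x := by
  simp [diagInvariants, sub_eq_zero]

def diagAvg (n N : ℕ) : TP n N →ₗ[ℂ] TP n N :=
  (n.factorial : ℂ)⁻¹ • ∑ τ : Equiv.Perm (Fin n), diagTP n N τ

lemma diagAvg_apply (x : TP n N) :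
    diagAvg n N x = (n.factorial : ℂ)⁻¹ • ∑ τ : Equiv.Perm (Fin n), diagTP n N τ x := by
  simp [diagAvg]

lemma inv_factorial_smul_sum_const {M : Type*} [AddCommGroup M] [Module ℂ M] (x : M) :
    (n.factorial : ℂ)⁻¹ • ∑ _τ : Equiv.Perm (Fin n), x = x := by
  rw [Finset.sum_const, Finset.card_univ, Fintype.card_perm, Fintype.card_fin,
    ← Nat.cast_smul_eq_nsmul ℂ, smul_smul, inv_mul_cancel₀ (mod_cast n.factorial_ne_zero),
    one_smul]

lemma diagAvg_apply_of_mem {x : TP n N} (hx : x ∈ diagInvariants n N) : diagAvg n N x = x := by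
  simp only [diagAvg_apply, mem_diagInvariants.1 hx, inv_factorial_smul_sum_const]

lemma diagAvg_diagTP (τ : Equiv.Perm (Fin n)) (x : TP n N) :
    diagAvg n N (diagTP n N τ x) = diagAvg n N x := by
  simp only [diagAvg_apply, diagTP_diagTP]
  congr 1
  exact Fintype.sum_equiv (Equiv.mulLeft τ) _ _ fun _ => rfl

lemma diagTP_diagAvg (τ : Equiv.Perm (Fin n)) (x : TP n N) :
    diagTP n N τ (diagAvg n N x) = diagAvg n N x := by
  simp only [diagAvg_apply, map_smul, map_sum, diagTP_diagTP]
  congr 1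
  exact Fintype.sum_equiv (Equiv.mulRight τ) _ _ fun _ => rfl

lemma diagAvg_mem_diagInvariants (x : TP n N) : diagAvg n N x ∈ diagInvariants n N :=
  mem_diagInvariants.2 fun τ => diagTP_diagAvg τ x

lemma diagAvg_permTP (σ : Equiv.Perm (Fin N)) (x : TP n N) :
    diagAvg n N (permTP n N σ x) = permTP n N σ (diagAvg n N x) := by
  simp only [diagAvg_apply, map_smul, map_sum, diagTP_permTP]

lemma actA_apply (a : MonoidAlgebra ℂ (Equiv.Perm (Fin N))) (x : TP n N) :
    actA n N a x = a.coeff.sum fun σ c => c • permTP n N σ x := by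
  simp [actA, Finsupp.sum]

lemma map_actA_of_commute {L : TP n N →ₗ[ℂ] TP m N}
    (hL : ∀ σ x, L (permTP n N σ x) = permTP m N σ (L x))
    (a : MonoidAlgebra ℂ (Equiv.Perm (Fin N))) (x : TP n N) :
    L (actA n N a x) = actA m N a (L x) := by
  simp only [actA_apply, Finsupp.sum, map_sum, map_smul, hL]

lemma SnInv_range_actA (a : MonoidAlgebra ℂ (Equiv.Perm (Fin N))) :
    SnInv n N (LinearMap.range (actA n N a)) = (diagInvariants n N).map (actA n N a) := by
  apply le_antisymm
  · rintro _ ⟨⟨u, rfl⟩, hinv⟩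
    refine ⟨diagAvg n N u, diagAvg_mem_diagInvariants u, ?_⟩
    rw [← map_actA_of_commute diagAvg_permTP, diagAvg_apply_of_mem hinv]
  · rintro _ ⟨u, hu, rfl⟩
    refine ⟨⟨u, rfl⟩, mem_diagInvariants.2 fun τ => ?_⟩
    rw [map_actA_of_commute (diagTP_permTP τ), mem_diagInvariants.1 hu τ]

lemma map_actA_diagInvariants_le (a : MonoidAlgebra ℂ (Equiv.Perm (Fin N))) :
    (diagInvariants n N).map (actA n N a) ≤ diagInvariants n N :=
  SnInv_range_actA a ▸ inf_le_right

lemma diagAvg_tensorBasis_eq_of_ker_eq {f g : Fin N → Fin n}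
    (h : Setoid.ker f = Setoid.ker g) :
    diagAvg n N (tensorBasis n N f) = diagAvg n N (tensorBasis n N g) := by
  obtain ⟨τ, rfl⟩ := exists_perm_comp_eq_of_ker_eq h
  rw [← diagAvg_diagTP τ⁻¹, diagTP_tensorBasis, inv_inv]

def avgReindex (c : (Fin N → Fin n) → Fin N → Fin m) : TP n N →ₗ[ℂ] TP m N :=
  diagAvg m N ∘ₗ (tensorBasis n N).constr ℂ (tensorBasis m N ∘ c)

lemma avgReindex_tensorBasis (c : (Fin N → Fin n) → Fin N → Fin m) (f : Fin N → Fin n) :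
    avgReindex c (tensorBasis n N f) = diagAvg m N (tensorBasis m N (c f)) := by
  simp [avgReindex]

lemma avgReindex_mem_diagInvariants (c : (Fin N → Fin n) → Fin N → Fin m) (x : TP n N) :
    avgReindex c x ∈ diagInvariants m N :=
  diagAvg_mem_diagInvariants _

lemma avgReindex_diagTP {c : (Fin N → Fin n) → Fin N → Fin m}
    (hc : ∀ f, Setoid.ker (c f) = Setoid.ker f) (τ : Equiv.Perm (Fin n)) (x : TP n N) :
    avgReindex c (diagTP n N τ x) = avgReindex c x :=
  LinearMap.congr_fun ((tensorBasis n N).ext (f₁ := avgReindex c ∘ₗ diagTP n N τ)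
    fun f => by
      simp only [LinearMap.comp_apply, diagTP_tensorBasis, avgReindex_tensorBasis]
      exact diagAvg_tensorBasis_eq_of_ker_eq <| by
        rw [hc, hc, ker_comp_of_injective (Equiv.injective _)]) x

lemma avgReindex_diagAvg {c : (Fin N → Fin n) → Fin N → Fin m}
    (hc : ∀ f, Setoid.ker (c f) = Setoid.ker f) (x : TP n N) :
    avgReindex c (diagAvg n N x) = avgReindex c x := by
  simp only [diagAvg_apply, map_smul, map_sum, avgReindex_diagTP hc,
    inv_factorial_smul_sum_const]

lemma avgReindex_permTP {c : (Fin N → Fin n) → Fin N → Fin m}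
    (hc : ∀ f, Setoid.ker (c f) = Setoid.ker f) (σ : Equiv.Perm (Fin N)) (x : TP n N) :
    avgReindex c (permTP n N σ x) = permTP m N σ (avgReindex c x) :=
  LinearMap.congr_fun ((tensorBasis n N).ext
    (f₁ := avgReindex c ∘ₗ (permTP n N σ).toLinearMap)
    (f₂ := (permTP m N σ).toLinearMap ∘ₗ avgReindex c)
    fun f => by
      simp only [LinearMap.comp_apply, LinearEquiv.coe_coe, permTP_tensorBasis,
        avgReindex_tensorBasis, ← diagAvg_permTP]
      exact diagAvg_tensorBasis_eq_of_ker_eq <| by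
        rw [hc, ker_comp_congr (hc f).symm]) x

lemma avgReindex_avgReindex {c : (Fin N → Fin n) → Fin N → Fin m}
    {c' : (Fin N → Fin m) → Fin N → Fin n} (hc : ∀ f, Setoid.ker (c f) = Setoid.ker f)
    (hc' : ∀ f, Setoid.ker (c' f) = Setoid.ker f) {x : TP n N}
    (hx : x ∈ diagInvariants n N) : avgReindex c' (avgReindex c x) = x := by
  have hcomp : avgReindex c' ∘ₗ avgReindex c = diagAvg n N :=
    (tensorBasis n N).ext fun f => by
      rw [LinearMap.comp_apply, avgReindex_tensorBasis, avgReindex_diagAvg hc',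
        avgReindex_tensorBasis]
      exact diagAvg_tensorBasis_eq_of_ker_eq (by rw [hc', hc])
  rw [← LinearMap.comp_apply, hcomp, diagAvg_apply_of_mem hx]

lemma avgReindex_mem_map_actA {c : (Fin N → Fin n) → Fin N → Fin m}
    (hc : ∀ f, Setoid.ker (c f) = Setoid.ker f) (a : MonoidAlgebra ℂ (Equiv.Perm (Fin N)))
    {x : TP n N} (hx : x ∈ (diagInvariants n N).map (actA n N a)) :
    avgReindex c x ∈ (diagInvariants m N).map (actA m N a) := by
  obtain ⟨u, -, rfl⟩ := hx
  exact ⟨avgReindex c u, avgReindex_mem_diagInvariants c u,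
    (map_actA_of_commute (avgReindex_permTP hc) a u).symm⟩

theorem finrank_SnInv_range_actA_eq (a : MonoidAlgebra ℂ (Equiv.Perm (Fin N)))
    (h1 : N ≤ m) (h2 : m ≤ n) :
    finrank ℂ (SnInv m N (LinearMap.range (actA m N a)))
      = finrank ℂ (SnInv n N (LinearMap.range (actA n N a))) := by
  have hΦ : ∀ f : Fin N → Fin m, Setoid.ker (Fin.castLE h2 ∘ f) = Setoid.ker f :=
    ker_comp_of_injective (Fin.castLE_injective h2)
  have hΨ : ∀ g : Fin N → Fin n, Setoid.ker (Fin.castLE h1 ∘ kerRep g) = Setoid.ker g :=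
    fun g => by rw [ker_comp_of_injective (Fin.castLE_injective h1), ker_kerRep]
  rw [SnInv_range_actA, SnInv_range_actA]
  exact finrank_eq_of_invOn (avgReindex _) (avgReindex _)
    (fun _ => avgReindex_mem_map_actA hΦ a) (fun _ => avgReindex_mem_map_actA hΨ a)
    (fun _ hx => avgReindex_avgReindex hΦ hΨ (map_actA_diagInvariants_le a hx))
    (fun _ hy => avgReindex_avgReindex hΨ hΦ (map_actA_diagInvariants_le a hy))

end WeylModuleInvariants

theorem weyl_module_invariants_stable_general (l : List ℕ) (m n : ℕ) (h1 : l.sum ≤ m) (h2 : m ≤ n) :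
    Module.finrank ℂ (SnInv m l.sum (WeylModule m l))
      = Module.finrank ℂ (SnInv n l.sum (WeylModule n l)) :=
  WeylModuleInvariants.finrank_SnInv_range_actA_eq (youngSym l l.sum) h1 h2

/-- For a partition `λ` with `|λ| ≤ m ≤ n`, the dimension of the `S_m`-invariants of the
Weyl module `ₘF^λ` equals the dimension of the `S_n`-invariants of `ₙF^λ`.  The
partition is given as a weakly decreasing list `l` of positive row lengths. -/
theorem weyl_module_invariants_stable (l : List ℕ) (hl : l.Pairwise (· ≥ ·))
    (hpos : ∀ x ∈ l, 0 < x) (m n : ℕ) (h1 : l.sum ≤ m) (h2 : m ≤ n) :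
    Module.finrank ℂ (SnInv m l.sum (WeylModule m l))
      = Module.finrank ℂ (SnInv n l.sum (WeylModule n l)) :=
  weyl_module_invariants_stable_general l m n h1 h2

end
end

section
/- Quasi-freeness in low degree (m=2 case): In the polynomial ring $\mathcal{R}_{k,n}$ in $k$ sets of $n$ variables with diagonal $S_n$-action, let $\mathcal{H}_{k,n}$ be the orthogonal complement (harmonics) of the ideal generated by the positive-degree polarized power sums $p_\alpha$. If for each multi-index $\alpha$ with $1 \leq d(\alpha) \leq 2$ we choose homogeneous $h_\alpha \in \mathcal{H}_{k,n}$ with $\deg h_\alpha + d(\alpha) = 2$, and $\sum_{d(\alpha)\leq 2} h_\alpha p_\alpha = 0$, then all $h_\alpha = 0$ (assuming $2 \leq n$). -/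
/-!
The derivations `L_a = ∑ⱼ ∂/∂(ₐxⱼ)` are the operators `p_{e_a}(∂)`, so they kill harmonics, which
therefore pass through them as constants; on power sums they act by `L_a p_α = α_a p_{α - e_a}`,
with `p_0 = n`. Applying `L_b L_a` to the relation `∑ h_α p_α = 0` kills every term with
`|α| ≤ 2` except `α = e_a + e_b`, leaving `n α_a h_α = 0`. Once the degree-two coefficients are
gone, applying `L_a` alone leaves `n h_{e_a} = 0`.
-/

open MvPolynomial

/-- The polarized power sum `p_α = ∑_{j=1}^n ∏_{i=1}^k (ᵢxⱼ)^{αᵢ}` in `k` sets of `n`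
variables. -/
noncomputable def polPowerSum (k n : ℕ) (α : Fin k → ℕ) :
    MvPolynomial (Fin k × Fin n) ℂ :=
  ∑ j : Fin n, ∏ i : Fin k, (X (i, j) : MvPolynomial (Fin k × Fin n) ℂ) ^ α i

/-- The constant-coefficient differential operator `f(∂)` associated to a polynomial `f`:
each monomial `c·∏ v, x_v^{β v}` acts as `c·∏ v, ∂_v^{β v}`. -/
noncomputable def diffOp (k n : ℕ) (f : MvPolynomial (Fin k × Fin n) ℂ) :
    Module.End ℂ (MvPolynomial (Fin k × Fin n) ℂ) :=
  (AddMonoidAlgebra.coeff f).sum fun β c =>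
    c • (β.support.noncommProd
      (fun v => (((pderiv v).toLinearMap : Module.End ℂ (MvPolynomial (Fin k × Fin n) ℂ)) ^ β v))
      (fun u _ v _ _ => Commute.pow_pow (LinearMap.ext fun p => by
        induction p using MvPolynomial.induction_on with
        | C a => simp [Module.End.mul_apply, pderiv_C]
        | add p q hp hq =>
            simp only [Module.End.mul_apply, map_add] at *
            rw [hp, hq]
        | mul_X p i hp =>
            simp only [Module.End.mul_apply, Derivation.coeFn_coe] at hp ⊢
            simp only [pderiv_mul, map_add]
            rw [hp]
            have h1 : ∀ a b : Fin k × Fin n,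
                (pderiv a) ((pderiv b) (X i : MvPolynomial (Fin k × Fin n) ℂ)) = 0 := by
              intro a b
              rcases eq_or_ne i b with rfl | hb
              · simp [pderiv_X_self]
              · simp [pderiv_X_of_ne hb]
            rw [h1, h1]
            ring) _ _))

/-- `h` is harmonic when it is killed by `p_α(∂)` for every Weyl generator `p_α`
(`α ≠ 0`, `|α| ≤ n`); equivalently, `h` is orthogonal (for the apolarity pairing) to the
ideal `𝓘_{k,n}` generated by the positive-degree polarized power sums. -/
def IsHarmonic (k n : ℕ) (h : MvPolynomial (Fin k × Fin n) ℂ) : Prop :=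
  ∀ α : Fin k → ℕ, α ≠ 0 → (∑ i, α i) ≤ n → diffOp k n (polPowerSum k n α) h = 0


section MultiIndex

variable {ι : Type*}

lemma eq_of_le_of_sum_le [Fintype ι] {α β : ι → ℕ} (hle : α ≤ β) (hsum : ∑ i, β i ≤ ∑ i, α i) :
    α = β :=
  hle.eq_of_not_lt fun hlt => (Fintype.sum_strictMono hlt).not_ge hsum

lemma single_le_of_ne_zero [DecidableEq ι] {α : ι → ℕ} {a : ι} (ha : α a ≠ 0) :
    Pi.single a 1 ≤ α := by
  intro i
  rcases eq_or_ne i a with rfl | hi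
  · simpa [Nat.one_le_iff_ne_zero]
  · simp [hi]

lemma single_add_single_le [DecidableEq ι] {α : ι → ℕ} {a b : ι} (ha : α a ≠ 0)
    (hb : (α - Pi.single a 1 : ι → ℕ) b ≠ 0) : Pi.single a 1 + Pi.single b 1 ≤ α := by
  intro i
  simp only [Pi.add_apply, Pi.sub_apply, Pi.single_apply] at hb ⊢
  by_cases hia : i = a <;> by_cases hib : i = b <;> by_cases hba : b = a <;> simp_all <;> omega

lemma sum_single_add_single [Fintype ι] [DecidableEq ι] (a b : ι) :
    ∑ i, (Pi.single a 1 + Pi.single b 1 : ι → ℕ) i = 2 := by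
  simp [Finset.sum_add_distrib]

lemma exists_eq_single_of_sum_eq_one [Fintype ι] [DecidableEq ι] {α : ι → ℕ}
    (h : ∑ i, α i = 1) : ∃ a, α = Pi.single a 1 := by
  obtain ⟨a, -, ha⟩ := Finset.exists_ne_zero_of_sum_ne_zero (h.trans_ne one_ne_zero)
  exact ⟨a, (eq_of_le_of_sum_le (single_le_of_ne_zero ha) (by simp [h])).symm⟩

lemma exists_eq_single_add_single_of_sum_eq_two [Fintype ι] [DecidableEq ι] {α : ι → ℕ}
    (h : ∑ i, α i = 2) : ∃ a b, α = Pi.single a 1 + Pi.single b 1 := by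
  obtain ⟨a, -, ha⟩ := Finset.exists_ne_zero_of_sum_ne_zero (h.trans_ne two_ne_zero)
  have hlt : Pi.single a 1 < α :=
    (single_le_of_ne_zero ha).lt_of_ne fun heq => by simp [← heq] at h
  obtain ⟨b, hb⟩ := (Pi.lt_def.1 hlt).2
  refine ⟨a, b, (eq_of_le_of_sum_le (single_add_single_le ha ?_) ?_).symm⟩
  · simp only [Pi.sub_apply]
    omega
  · rw [h, sum_single_add_single]

lemma mem_piFinset_range_of_sum_le [Fintype ι] [DecidableEq ι] {α : ι → ℕ} {m : ℕ}
    (h : ∑ i, α i ≤ m) : α ∈ Fintype.piFinset fun _ => Finset.range (m + 1) := by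
  refine Fintype.mem_piFinset.2 fun i => Finset.mem_range.2 (Nat.lt_succ_of_le ?_)
  exact (Finset.single_le_sum (fun j _ => Nat.zero_le (α j)) (Finset.mem_univ i)).trans h

end MultiIndex

section PowerSums

variable {k n : ℕ}

noncomputable def diagDeriv (a : Fin k) :
    Derivation ℂ (MvPolynomial (Fin k × Fin n) ℂ) (MvPolynomial (Fin k × Fin n) ℂ) :=
  ∑ j, pderiv (a, j)

lemma diagDeriv_apply (a : Fin k) (f : MvPolynomial (Fin k × Fin n) ℂ) :
    diagDeriv a f = ∑ j, pderiv (a, j) f := by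
  rw [diagDeriv, ← Derivation.coeFnAddMonoidHom_apply, map_sum, Finset.sum_apply]
  rfl

lemma diffOp_add (f g : MvPolynomial (Fin k × Fin n) ℂ) :
    diffOp k n (f + g) = diffOp k n f + diffOp k n g := by
  rw [diffOp, AddMonoidAlgebra.coeff_add]
  exact Finsupp.sum_add_index' (fun _ => zero_smul _ _) (fun _ _ _ => add_smul _ _ _)

lemma diffOp_X (v : Fin k × Fin n) : diffOp k n (X v) = (pderiv v).toLinearMap := by
  rw [diffOp, X, sum_monomial_eq (by simp)]
  simp

lemma diffOp_polPowerSum_single (a : Fin k) :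
    diffOp k n (polPowerSum k n (Pi.single a 1)) = (diagDeriv a).toLinearMap := by
  have hp : polPowerSum k n (Pi.single a 1) = ∑ j, X (a, j) := by
    refine Finset.sum_congr rfl fun j _ => ?_
    rw [Fintype.prod_eq_single a fun i hi => by simp [hi]]
    simp
  change AddMonoidHom.mk' (diffOp k n) diffOp_add _ = _
  rw [hp, map_sum]
  refine LinearMap.ext fun f => ?_
  simp [diffOp_X, LinearMap.sum_apply, diagDeriv_apply]

lemma IsHarmonic.diagDeriv_eq_zero {f : MvPolynomial (Fin k × Fin n) ℂ} (hf : IsHarmonic k n f)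
    (hn : n ≠ 0) (a : Fin k) : diagDeriv a f = 0 := by
  have := hf (Pi.single a 1) (by simp) (by simpa [Nat.one_le_iff_ne_zero])
  rwa [diffOp_polPowerSum_single] at this

lemma prod_X_pow_eq_monomial_sum_single (α : Fin k → ℕ) (j : Fin n) :
    ∏ i, (X (i, j) : MvPolynomial (Fin k × Fin n) ℂ) ^ α i
      = monomial (∑ i, Finsupp.single (i, j) (α i)) 1 := by
  simp [monomial_sum_index, X_pow_eq_monomial]

lemma sum_single_apply (α : Fin k → ℕ) (j : Fin n) (v : Fin k × Fin n) :
    (∑ i, Finsupp.single (i, j) (α i)) v = if v.2 = j then α v.1 else 0 := by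
  classical
  obtain ⟨a, j'⟩ := v
  by_cases h : j' = j <;> simp [Finsupp.finsetSum_apply, Finsupp.single_apply, h]

lemma pderiv_prod_X_pow (α : Fin k → ℕ) (a : Fin k) (j j' : Fin n) :
    pderiv (a, j') (∏ i, (X (i, j) : MvPolynomial (Fin k × Fin n) ℂ) ^ α i)
      = if j' = j then (α a : ℂ) • ∏ i, X (i, j) ^ (α - Pi.single a 1 : Fin k → ℕ) i else 0 := by
  rw [prod_X_pow_eq_monomial_sum_single, prod_X_pow_eq_monomial_sum_single, pderiv_monomial,
    sum_single_apply]
  split_ifs with h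
  · subst h
    have hexp : (∑ i, Finsupp.single (i, j') (α i)) - Finsupp.single (a, j') 1
        = ∑ i, Finsupp.single (i, j') ((α - Pi.single a 1 : Fin k → ℕ) i) := by
      ext v
      simp only [Finsupp.tsub_apply, sum_single_apply, Finsupp.single_apply, Pi.sub_apply]
      split_ifs <;> grind
    rw [hexp, smul_monomial, smul_eq_mul, mul_one, one_mul]
  · simp

lemma diagDeriv_polPowerSum (a : Fin k) (α : Fin k → ℕ) :
    diagDeriv a (polPowerSum k n α) = (α a : ℂ) • polPowerSum k n (α - Pi.single a 1) := by
  simp [diagDeriv_apply, polPowerSum, pderiv_prod_X_pow, Finset.smul_sum]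

lemma polPowerSum_zero : polPowerSum k n 0 = n := by
  simp [polPowerSum]

lemma diagDeriv_polPowerSum_of_sum_le_one {α : Fin k → ℕ} (hα : ∑ i, α i ≤ 1) (a : Fin k) :
    diagDeriv a (polPowerSum k n α) = if α = Pi.single a 1 then (n : MvPolynomial _ ℂ) else 0 := by
  rw [diagDeriv_polPowerSum]
  split_ifs with h
  · subst h
    simp [polPowerSum_zero]
  · have ha : α a = 0 := by
      by_contra ha
      exact h (eq_of_le_of_sum_le (single_le_of_ne_zero ha) (by simpa using hα)).symm
    simp [ha]

lemma diagDeriv_diagDeriv_polPowerSum_of_sum_le_two {α : Fin k → ℕ} (hα : ∑ i, α i ≤ 2)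
    (a b : Fin k) :
    diagDeriv b (diagDeriv a (polPowerSum k n α))
      = if α = Pi.single a 1 + Pi.single b 1 then C ((α a : ℂ) * n) else 0 := by
  rw [diagDeriv_polPowerSum, Derivation.map_smul, diagDeriv_polPowerSum, smul_smul]
  split_ifs with h
  · subst h
    simp [polPowerSum_zero, smul_eq_C_mul]
  · have hab : α a = 0 ∨ (α - Pi.single a 1 : Fin k → ℕ) b = 0 := by
      by_contra! hab
      exact h (eq_of_le_of_sum_le (single_add_single_le hab.1 hab.2)
        (by rwa [sum_single_add_single])).symm
    rcases hab with hab | hab <;> simp [hab]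

lemma diagDeriv_sum_mul {S : Finset (Fin k → ℕ)}
    {g f : (Fin k → ℕ) → MvPolynomial (Fin k × Fin n) ℂ} {a : Fin k}
    (hg : ∀ α, diagDeriv a (g α) = 0) :
    diagDeriv a (∑ α ∈ S, g α * f α) = ∑ α ∈ S, g α * diagDeriv a (f α) := by
  simp [Derivation.leibniz, hg]

section Relation

variable {S : Finset (Fin k → ℕ)} {g : (Fin k → ℕ) → MvPolynomial (Fin k × Fin n) ℂ}

lemma eq_zero_of_sum_mul_polPowerSum_eq_zero_of_sum_eq_two (hn : n ≠ 0)
    (hg : ∀ a α, diagDeriv a (g α) = 0) (hrel : ∑ α ∈ S, g α * polPowerSum k n α = 0)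
    (hS : ∀ α ∈ S, ∑ i, α i ≤ 2) {α : Fin k → ℕ} (hα : α ∈ S)
    (h2 : ∑ i, α i = 2) : g α = 0 := by
  obtain ⟨a, b, rfl⟩ := exists_eq_single_add_single_of_sum_eq_two h2
  have key := congrArg (fun f => diagDeriv b (diagDeriv a f)) hrel
  simp only [diagDeriv_sum_mul (hg _), map_zero] at key
  rw [Finset.sum_congr rfl fun β hβ => by
    rw [diagDeriv_diagDeriv_polPowerSum_of_sum_le_two (hS β hβ)]] at key
  simp only [mul_ite, mul_zero, Finset.sum_ite_eq', if_pos hα] at key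
  exact (mul_eq_zero.1 key).resolve_right <| C_eq_zero.not.2 <|
    mul_ne_zero (Nat.cast_ne_zero.2 (by simp)) (Nat.cast_ne_zero.2 hn)

lemma eq_zero_of_sum_mul_polPowerSum_eq_zero_of_sum_eq_one (hn : n ≠ 0)
    (hg : ∀ a α, diagDeriv a (g α) = 0) (hrel : ∑ α ∈ S, g α * polPowerSum k n α = 0)
    (hS : ∀ α ∈ S, ∑ i, α i ≤ 2) {α : Fin k → ℕ} (hα : α ∈ S)
    (h1 : ∑ i, α i = 1) : g α = 0 := by
  obtain ⟨a, rfl⟩ := exists_eq_single_of_sum_eq_one h1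
  have key := congrArg (diagDeriv a) hrel
  rw [diagDeriv_sum_mul (hg a), map_zero] at key
  have hterm : ∀ β ∈ S, g β * diagDeriv a (polPowerSum k n β)
      = g β * if β = Pi.single a 1 then (n : MvPolynomial _ ℂ) else 0 := by
    intro β hβ
    rcases (hS β hβ).lt_or_eq with hlt | h2
    · rw [diagDeriv_polPowerSum_of_sum_le_one (by omega)]
    · rw [eq_zero_of_sum_mul_polPowerSum_eq_zero_of_sum_eq_two hn hg hrel hS hβ h2, zero_mul,
        zero_mul]
  rw [Finset.sum_congr rfl hterm] at key
  simp only [mul_ite, mul_zero, Finset.sum_ite_eq', if_pos hα] at key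
  exact (mul_eq_zero.1 key).resolve_right (Nat.cast_ne_zero.2 hn)

lemma eq_zero_of_sum_mul_polPowerSum_eq_zero (hn : n ≠ 0) (hg : ∀ a α, diagDeriv a (g α) = 0)
    (hrel : ∑ α ∈ S, g α * polPowerSum k n α = 0) (hS : ∀ α ∈ S, ∑ i, α i ≤ 2)
    {α : Fin k → ℕ} (hα : α ∈ S) (h1 : 1 ≤ ∑ i, α i) : g α = 0 := by
  rcases h1.eq_or_lt with h1 | h1
  · exact eq_zero_of_sum_mul_polPowerSum_eq_zero_of_sum_eq_one hn hg hrel hS hα h1.symm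
  · have h2 := hS α hα
    exact eq_zero_of_sum_mul_polPowerSum_eq_zero_of_sum_eq_two hn hg hrel hS hα (by omega)

end Relation

end PowerSums

open scoped Classical in
theorem quasi_freeness_degree_two_general (k n : ℕ) (hn : 2 ≤ n)
    (h : (Fin k → ℕ) → MvPolynomial (Fin k × Fin n) ℂ)
    (hharm : ∀ α, IsHarmonic k n (h α))
    (hzero : ∑ α ∈ (Fintype.piFinset fun _ : Fin k => Finset.range 3).filter
        (fun α => 1 ≤ ∑ i, α i ∧ ∑ i, α i ≤ 2), h α * polPowerSum k n α = 0) :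
    ∀ α : Fin k → ℕ, 1 ≤ ∑ i, α i → ∑ i, α i ≤ 2 → h α = 0 := by
  intro α h1 h2
  have hn0 : n ≠ 0 := by omega
  exact eq_zero_of_sum_mul_polPowerSum_eq_zero hn0
    (fun a β => (hharm β).diagDeriv_eq_zero hn0 a) hzero
    (fun β hβ => (Finset.mem_filter.1 hβ).2.2)
    (Finset.mem_filter.2 ⟨mem_piFinset_range_of_sum_le h2, h1, h2⟩) h1

open scoped Classical in
/-- Quasi-freeness in degree `m = 2`: if homogeneous harmonics `h_α` with
`deg h_α + d(α) = 2` (for `1 ≤ d(α) ≤ 2`) satisfy `∑_α h_α p_α = 0`, then all `h_α = 0`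
(assuming `2 ≤ n`). -/
theorem quasi_freeness_degree_two (k n : ℕ) (hn : 2 ≤ n)
    (h : (Fin k → ℕ) → MvPolynomial (Fin k × Fin n) ℂ)
    (hharm : ∀ α, IsHarmonic k n (h α))
    (hhom : ∀ α : Fin k → ℕ, 1 ≤ ∑ i, α i → ∑ i, α i ≤ 2 →
      (h α).IsHomogeneous (2 - ∑ i, α i))
    (hzero : ∑ α ∈ (Fintype.piFinset fun _ : Fin k => Finset.range 3).filter
        (fun α => 1 ≤ ∑ i, α i ∧ ∑ i, α i ≤ 2), h α * polPowerSum k n α = 0) :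
    ∀ α : Fin k → ℕ, 1 ≤ ∑ i, α i → ∑ i, α i ≤ 2 → h α = 0 :=
  quasi_freeness_degree_two_general k n hn h hharm hzero
end
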